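/- Let Γ be a countable amenable group with Følner sequence (F_n) acting on a compact Hausdorff space X. Then for any A ⊆ X, the upper Banach density satisfies D̄(A) = lim_{n→∞} sup_{x ∈ X} (1/|F_n|) Σ_{s ∈ F_n} 1_A(sx), in particular this limit exists and is independent of the choice of Følner sequence. -/
import Mathlib


open MeasureTheory

open Classical in
/-- The average of `1_A` along the partial orbit `F • x`. -/
noncomputable def orbitAvg {Γ X : Type*} [Group Γ] [MulAction Γ X]
    (F : Finset Γ) (A : Set X) (x : X) : ℝ :=
  ((F.card : ℝ))⁻¹ * (F.sum fun s => if s • x ∈ A then (1 : ℝ) else 0)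

/-- The upper Banach density of `A ⊆ X` with respect to the action of `Γ`:
`D̄(A) = inf over finite nonempty F ⊆ Γ of sup_x (1/|F|) Σ_{s ∈ F} 1_A(sx)`. -/
noncomputable def upperBanachDensity (Γ : Type*) {X : Type*} [Group Γ] [MulAction Γ X]
    (A : Set X) : ℝ :=
  sInf {v : ℝ | ∃ F : Finset Γ, F.Nonempty ∧ v = ⨆ x : X, orbitAvg F A x}

/-- `μ` is a `Γ`-invariant Borel probability measure. -/
def IsInvariantProbMeasure (Γ : Type*) {X : Type*} [Group Γ] [MulAction Γ X]
    [MeasurableSpace X] (μ : Measure X) : Prop :=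
  IsProbabilityMeasure μ ∧ ∀ γ : Γ, Measure.map (fun x : X => γ • x) μ = μ

/-- A Følner sequence of finite sets in a group. -/
def IsFolnerSeqGroup {Γ : Type*} [Group Γ] [DecidableEq Γ] (F : ℕ → Finset Γ) : Prop :=
  (∀ n, (F n).Nonempty) ∧
  ∀ γ : Γ, Filter.Tendsto
    (fun n => (((symmDiff ((F n).image (fun s => γ * s)) (F n)).card : ℝ)) / ((F n).card : ℝ))
    Filter.atTop (nhds 0)

section Aux

open Classical

variable {Γ X : Type*} [Group Γ] [MulAction Γ X]

private lemma orbitAvg_nonneg (F : Finset Γ) (A : Set X) (x : X) :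
    0 ≤ orbitAvg F A x := by
  unfold orbitAvg
  exact mul_nonneg (by positivity) (Finset.sum_nonneg fun s _ => by split <;> norm_num)

private lemma orbitAvg_le_one (F : Finset Γ) (A : Set X) (x : X) :
    orbitAvg F A x ≤ 1 := by
  unfold orbitAvg
  rcases eq_or_ne ((F.card : ℝ)) 0 with h | h
  · simp [h]
  have hsum : (F.sum fun s => if s • x ∈ A then (1 : ℝ) else 0) ≤ (F.card : ℝ) := by
    calc (F.sum fun s => if s • x ∈ A then (1 : ℝ) else 0)
        ≤ F.sum fun _ => (1 : ℝ) := Finset.sum_le_sum fun s _ => by split <;> norm_num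
      _ = (F.card : ℝ) := by simp
  calc ((F.card : ℝ))⁻¹ * (F.sum fun s => if s • x ∈ A then (1 : ℝ) else 0)
      ≤ ((F.card : ℝ))⁻¹ * (F.card : ℝ) :=
        mul_le_mul_of_nonneg_left hsum (by positivity)
    _ = 1 := inv_mul_cancel₀ h

private lemma bddAbove_orbitAvg (F : Finset Γ) (A : Set X) :
    BddAbove (Set.range fun x : X => orbitAvg F A x) :=
  ⟨1, by rintro v ⟨x, rfl⟩; exact orbitAvg_le_one F A x⟩

private lemma sup_orbitAvg_nonneg (F : Finset Γ) (A : Set X) :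
    0 ≤ ⨆ x : X, orbitAvg F A x :=
  Real.iSup_nonneg fun x => orbitAvg_nonneg F A x

/-- The key estimate: the sup of averages over `G` is at most the sup of averages over `F`
plus the normalized symmetric-difference error. -/
private lemma sup_orbitAvg_le [DecidableEq Γ] (F G : Finset Γ) (hF : F.Nonempty)
    (hG : G.Nonempty) (A : Set X) :
    (⨆ x : X, orbitAvg G A x) ≤ (⨆ x : X, orbitAvg F A x)
      + ((F.card : ℝ))⁻¹ * F.sum (fun t =>
          ((symmDiff (G.image fun s => t * s) G).card : ℝ) / (G.card : ℝ)) := by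
  have ha : (0 : ℝ) < (F.card : ℝ) := by exact_mod_cast hF.card_pos
  have hb : (0 : ℝ) < (G.card : ℝ) := by exact_mod_cast hG.card_pos
  have hεnn : 0 ≤ ((F.card : ℝ))⁻¹ * F.sum (fun t =>
      ((symmDiff (G.image fun s => t * s) G).card : ℝ) / (G.card : ℝ)) := by
    apply mul_nonneg (by positivity)
    exact Finset.sum_nonneg fun t _ => by positivity
  apply Real.iSup_le _ (add_nonneg (sup_orbitAvg_nonneg F A) hεnn)
  intro x
  set M := ⨆ y : X, orbitAvg F A y with hMdef
  have hM : ∀ y : X, orbitAvg F A y ≤ M := fun y =>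
    le_ciSup (bddAbove_orbitAvg F A) y
  -- step 1 : translation estimate
  have step1 : ∀ t ∈ F,
      (G.sum fun s => if s • x ∈ A then (1 : ℝ) else 0)
        ≤ (G.sum fun s => if t • (s • x) ∈ A then (1 : ℝ) else 0)
          + ((symmDiff (G.image fun s => t * s) G).card : ℝ) := by
    intro t _
    set H := G.image fun s => t * s with hH
    have himg : (H.sum fun u => if u • x ∈ A then (1 : ℝ) else 0)
        = G.sum fun s => if t • (s • x) ∈ A then (1 : ℝ) else 0 := by
      rw [hH, Finset.sum_image (fun a _ b _ h => mul_left_cancel h)]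
      exact Finset.sum_congr rfl fun s _ => by rw [mul_smul]
    have hsplit : (G.sum fun u => if u • x ∈ A then (1 : ℝ) else 0)
        = ((G ∩ H).sum fun u => if u • x ∈ A then (1 : ℝ) else 0)
          + ((G \ H).sum fun u => if u • x ∈ A then (1 : ℝ) else 0) :=
      (Finset.sum_inter_add_sum_sdiff G H _).symm
    have h1 : ((G ∩ H).sum fun u => if u • x ∈ A then (1 : ℝ) else 0)
        ≤ H.sum fun u => if u • x ∈ A then (1 : ℝ) else 0 :=
      Finset.sum_le_sum_of_subset_of_nonneg Finset.inter_subset_right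
        (fun u _ _ => by split <;> norm_num)
    have h2 : ((G \ H).sum fun u => if u • x ∈ A then (1 : ℝ) else 0)
        ≤ ((symmDiff H G).card : ℝ) := by
      have hsub : G \ H ⊆ symmDiff H G := by
        intro u hu
        simp only [Finset.mem_sdiff] at hu
        simp [Finset.mem_symmDiff, hu.1, hu.2]
      calc ((G \ H).sum fun u => if u • x ∈ A then (1 : ℝ) else 0)
          ≤ (G \ H).sum fun _ => (1 : ℝ) :=
            Finset.sum_le_sum fun u _ => by split <;> norm_num
        _ = ((G \ H).card : ℝ) := by simp
        _ ≤ ((symmDiff H G).card : ℝ) := by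
            exact_mod_cast Finset.card_le_card hsub
    rw [hsplit, ← himg]
    linarith
  -- step 2 : bound the double sum by M
  have step2 : (G.sum fun s => orbitAvg F A (s • x)) ≤ (G.card : ℝ) * M := by
    calc (G.sum fun s => orbitAvg F A (s • x))
        ≤ G.sum fun _ => M := Finset.sum_le_sum fun s _ => hM (s • x)
      _ = (G.card : ℝ) * M := by simp [mul_comm]
  -- combine
  set S := G.sum fun s => if s • x ∈ A then (1 : ℝ) else 0 with hS
  set D := F.sum fun t => ((symmDiff (G.image fun s => t * s) G).card : ℝ) with hD
  have key : (F.card : ℝ) * S ≤ (F.card : ℝ) * ((G.card : ℝ) * M) + D := by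
    have h1 : (F.card : ℝ) * S = F.sum fun _ => S := by simp [mul_comm]
    have h2 : (F.sum fun _ => S)
        ≤ F.sum fun t => (G.sum fun s => if t • (s • x) ∈ A then (1 : ℝ) else 0)
            + ((symmDiff (G.image fun s => t * s) G).card : ℝ) :=
      Finset.sum_le_sum step1
    have h3 : (F.sum fun t => (G.sum fun s => if t • (s • x) ∈ A then (1 : ℝ) else 0)
            + ((symmDiff (G.image fun s => t * s) G).card : ℝ))
        = (F.sum fun t => G.sum fun s => if t • (s • x) ∈ A then (1 : ℝ) else 0) + D := by
      rw [Finset.sum_add_distrib]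
    have h4 : (F.sum fun t => G.sum fun s => if t • (s • x) ∈ A then (1 : ℝ) else 0)
        = (F.card : ℝ) * G.sum fun s => orbitAvg F A (s • x) := by
      rw [Finset.sum_comm, Finset.mul_sum]
      refine Finset.sum_congr rfl fun s _ => ?_
      unfold orbitAvg
      rw [← mul_assoc, mul_inv_cancel₀ ha.ne', one_mul]
    have h5 : (F.card : ℝ) * (G.sum fun s => orbitAvg F A (s • x))
        ≤ (F.card : ℝ) * ((G.card : ℝ) * M) :=
      mul_le_mul_of_nonneg_left step2 ha.le
    calc (F.card : ℝ) * S = F.sum fun _ => S := h1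
      _ ≤ _ := h2
      _ = _ + D := h3
      _ ≤ (F.card : ℝ) * ((G.card : ℝ) * M) + D := by rw [h4]; linarith
  have hSle : S ≤ (G.card : ℝ) * M + ((F.card : ℝ))⁻¹ * D := by
    have := mul_le_mul_of_nonneg_left key (inv_nonneg.2 ha.le)
    rw [mul_add, ← mul_assoc, inv_mul_cancel₀ ha.ne', one_mul, ← mul_assoc,
      inv_mul_cancel₀ ha.ne', one_mul] at this
    exact this
  have hfinal : orbitAvg G A x ≤ M + ((G.card : ℝ))⁻¹ * (((F.card : ℝ))⁻¹ * D) := by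
    unfold orbitAvg
    rw [← hS]
    calc ((G.card : ℝ))⁻¹ * S
        ≤ ((G.card : ℝ))⁻¹ * ((G.card : ℝ) * M + ((F.card : ℝ))⁻¹ * D) :=
          mul_le_mul_of_nonneg_left hSle (by positivity)
      _ = M + ((G.card : ℝ))⁻¹ * (((F.card : ℝ))⁻¹ * D) := by
          rw [mul_add, ← mul_assoc, inv_mul_cancel₀ hb.ne', one_mul]
  have heq : ((G.card : ℝ))⁻¹ * (((F.card : ℝ))⁻¹ * D)
      = ((F.card : ℝ))⁻¹ * F.sum (fun t =>
          ((symmDiff (G.image fun s => t * s) G).card : ℝ) / (G.card : ℝ)) := by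
    rw [hD, Finset.mul_sum, Finset.mul_sum, Finset.mul_sum]
    refine Finset.sum_congr rfl fun t _ => ?_
    rw [div_eq_mul_inv]
    ring
  linarith

end Aux

/-- for a countable amenable group acting on a compact Hausdorff
space and any Følner sequence `(F_n)`, the upper Banach density of any `A ⊆ X`
is the limit of the suprema of the averages over `F_n`; in particular the limit
exists and does not depend on the Følner sequence. -/
theorem tendsto_orbitAvg_sup_upperBanachDensity
    {Γ X : Type*} [Group Γ] [Countable Γ] [DecidableEq Γ]
    [TopologicalSpace X] [CompactSpace X] [T2Space X] [MulAction Γ X]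
    (hact : ∀ γ : Γ, Continuous fun x : X => γ • x)
    (F : ℕ → Finset Γ) (hF : IsFolnerSeqGroup F)
    (A : Set X) :
    Filter.Tendsto (fun n => ⨆ x : X, orbitAvg (F n) A x)
      Filter.atTop (nhds (upperBanachDensity Γ A)) := by
  obtain ⟨hFne, hFol⟩ := hF
  set S : Set ℝ := {v : ℝ | ∃ F' : Finset Γ, F'.Nonempty ∧ v = ⨆ x : X, orbitAvg F' A x}
    with hSdef
  have hSne : S.Nonempty := ⟨_, {1}, Finset.singleton_nonempty 1, rfl⟩
  have hDsInf : upperBanachDensity Γ A = sInf S := rfl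
  have hbdd : BddBelow S := ⟨0, by rintro v ⟨F'', _, rfl⟩; exact sup_orbitAvg_nonneg F'' A⟩
  have hD_le : ∀ F' : Finset Γ, F'.Nonempty →
      upperBanachDensity Γ A ≤ ⨆ x : X, orbitAvg F' A x := by
    intro F' hF'
    rw [hDsInf]
    exact csInf_le hbdd ⟨F', hF', rfl⟩
  rw [Metric.tendsto_atTop]
  intro ε hε
  obtain ⟨v, ⟨F', hF', rfl⟩, hvlt⟩ := Real.lt_sInf_add_pos hSne (half_pos hε)
  -- the error terms tend to zero
  have herr : Filter.Tendsto (fun n => ((F'.card : ℝ))⁻¹ * F'.sum (fun t =>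
      ((symmDiff ((F n).image fun s => t * s) (F n)).card : ℝ) / ((F n).card : ℝ)))
      Filter.atTop (nhds 0) := by
    have hsum : Filter.Tendsto (fun n => F'.sum (fun t =>
        ((symmDiff ((F n).image fun s => t * s) (F n)).card : ℝ) / ((F n).card : ℝ)))
        Filter.atTop (nhds 0) := by
      have := tendsto_finset_sum F' (fun t _ => hFol t)
      simpa using this
    simpa using hsum.const_mul ((F'.card : ℝ))⁻¹
  have herr' := Metric.tendsto_atTop.1 herr (ε / 2) (half_pos hε)
  obtain ⟨N, hN⟩ := herr'
  refine ⟨N, fun n hn => ?_⟩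
  have h1 : upperBanachDensity Γ A ≤ ⨆ x : X, orbitAvg (F n) A x := hD_le (F n) (hFne n)
  have h2 : (⨆ x : X, orbitAvg (F n) A x) ≤ (⨆ x : X, orbitAvg F' A x)
      + ((F'.card : ℝ))⁻¹ * F'.sum (fun t =>
          ((symmDiff ((F n).image fun s => t * s) (F n)).card : ℝ) / ((F n).card : ℝ)) :=
    sup_orbitAvg_le F' (F n) hF' (hFne n) A
  have h3 := hN n hn
  rw [Real.dist_eq, sub_zero] at h3
  have h3' : ((F'.card : ℝ))⁻¹ * F'.sum (fun t =>
      ((symmDiff ((F n).image fun s => t * s) (F n)).card : ℝ) / ((F n).card : ℝ)) < ε / 2 :=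
    (le_abs_self _).trans_lt h3
  rw [Real.dist_eq, abs_lt, hDsInf]
  constructor
  · rw [hDsInf] at h1; linarith
  · linarith
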